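/- Let A be a commutative noetherian ring, M a finitely generated A-module, and π: M → M^tl the canonical surjection onto the torsionless quotient. For every finitely generated A-module P, the map Hom_A(M*, P) → Hom_A((M^tl)*, P) given by precomposition with π*: (M^tl)* → M* is bijective, and it maps G_M(P) onto G_{M^tl}(P). -/
import Mathlib


open Module LinearMap

/-- A linear map `φ : M → F` is *versal* if every linear map from `M` into a finitely
generated free module factors through `φ`. -/
def IsVersal (A : Type) [CommRing A] {M F : Type} [AddCommGroup M] [Module A M]
    [AddCommGroup F] [Module A F] (φ : M →ₗ[A] F) : Prop :=
  ∀ (E : Type) [AddCommGroup E] [Module A E] [Module.Free A E] [Module.Finite A E]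
    (g : M →ₗ[A] E), ∃ h : F →ₗ[A] E, g = h ∘ₗ φ

open Module LinearMap TensorProduct

/-- The natural map `α_{M,P} : M ⊗ P → Hom(M*, P)`, `α(m ⊗ p)(λ) = λ(m) • p`. -/
noncomputable def alphaMap (A : Type) [CommRing A] (M P : Type) [AddCommGroup M]
    [Module A M] [AddCommGroup P] [Module A P] :
    M ⊗[A] P →ₗ[A] (Module.Dual A M →ₗ[A] P) :=
  (dualTensorHom A (Module.Dual A M) P) ∘ₗ
    (TensorProduct.map (Module.Dual.eval A M) LinearMap.id)

/-- `G_M(P)` is the image of `α_{M,P} : M ⊗ P → Hom(M*, P)`. -/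
noncomputable def GFun (A : Type) [CommRing A] (M P : Type) [AddCommGroup M] [Module A M]
    [AddCommGroup P] [Module A P] : Submodule A (Module.Dual A M →ₗ[A] P) :=
  LinearMap.range (alphaMap A M P)

/-- For the canonical surjection `π : M → M^tl`, precomposition with
`π* : (M^tl)* → M*` gives a bijection `Hom(M*, P) → Hom((M^tl)*, P)` carrying
`G_M(P)` onto `G_{M^tl}(P)`, for every finitely generated `P`. -/
theorem stmt13 (A : Type) [CommRing A] [IsNoetherianRing A]
    (M : Type) [AddCommGroup M] [Module A M] [Module.Finite A M]
    (P : Type) [AddCommGroup P] [Module A P] [Module.Finite A P] :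
    Function.Bijective
        (LinearMap.lcomp A P (Module.Dual.eval A M).rangeRestrict.dualMap) ∧
      Submodule.map (LinearMap.lcomp A P (Module.Dual.eval A M).rangeRestrict.dualMap)
          (GFun A M P) =
        GFun A (↥(LinearMap.range (Module.Dual.eval A M))) P := by

  classical
  set π := (Module.Dual.eval A M).rangeRestrict with hπdef
  have hπs : Function.Surjective π := (Module.Dual.eval A M).surjective_rangeRestrict
  have hdinj : Function.Injective π.dualMap := by
    intro f g h
    ext x
    obtain ⟨y, rfl⟩ := hπs x
    simpa [LinearMap.dualMap_apply] using LinearMap.congr_fun h y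
  have hdsurj : Function.Surjective π.dualMap := by
    intro g
    refine ⟨(LinearMap.applyₗ g) ∘ₗ (LinearMap.range (Module.Dual.eval A M)).subtype, ?_⟩
    ext m
    simp [π, LinearMap.dualMap_apply, Module.Dual.eval_apply]
  let e : Module.Dual A ↥(LinearMap.range (Module.Dual.eval A M)) ≃ₗ[A] Module.Dual A M :=
    LinearEquiv.ofBijective π.dualMap ⟨hdinj, hdsurj⟩
  constructor
  · constructor
    · intro f g h
      ext φ
      obtain ⟨ψ, rfl⟩ := hdsurj φ
      simpa [LinearMap.lcomp_apply] using LinearMap.congr_fun h ψ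
    · intro g
      refine ⟨g ∘ₗ (e.symm : Module.Dual A M →ₗ[A] _), ?_⟩
      ext ψ
      have : e.symm (π.dualMap ψ) = ψ := by
        have : π.dualMap ψ = e ψ := rfl
        rw [this, LinearEquiv.symm_apply_apply]
      simp [LinearMap.lcomp_apply, this]
  · have key : (LinearMap.lcomp A P π.dualMap) ∘ₗ alphaMap A M P
        = alphaMap A (↥(LinearMap.range (Module.Dual.eval A M))) P ∘ₗ
          TensorProduct.map π LinearMap.id := by
      apply TensorProduct.ext'
      intro m p
      ext φ
      simp [alphaMap, π, Module.Dual.eval_apply, LinearMap.dualMap_apply]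
    have hms : Function.Surjective (TensorProduct.map π (LinearMap.id : P →ₗ[A] P)) :=
      TensorProduct.map_surjective hπs Function.surjective_id
    rw [GFun, GFun, ← LinearMap.range_comp, key, LinearMap.range_comp,
      LinearMap.range_eq_top.mpr hms, Submodule.map_top]
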